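/- arXiv:1503.07339 — 6 statements merged into one kernel-verified Lean document; each statement's English description precedes it below -/
import Mathlib

section
/- Let g be an n×n complex unitary matrix and let γ be an invertible n×n complex matrix that is upper triangular with strictly positive real diagonal entries. Suppose γ⁻¹g = g₁b₁ where g₁ is unitary and b₁ is upper triangular with strictly positive real diagonal entries, and suppose γ†g = g₂b₂ where g₂ is unitary and b₂ is lower triangular with strictly positive real diagonal entries. Then g₁ = g₂. -/
open Matrix

/-- Diagonal entry of a product of two upper triangular matrices. -/
lemma diag_mul_tri {n : ℕ} (A B : Matrix (Fin n) (Fin n) ℂ)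
    (hA : A.BlockTriangular (id : Fin n → Fin n))
    (hB : B.BlockTriangular (id : Fin n → Fin n)) (i : Fin n) :
    (A * B) i i = A i i * B i i := by
  rw [mul_apply]
  apply Finset.sum_eq_single
  · intro k _ hk
    rcases lt_or_gt_of_ne hk with h | h
    · rw [hA (show (id k : Fin n) < id i from h), zero_mul]
    · rw [hB (show (id i : Fin n) < id k from h), mul_zero]
  · intro h; exact absurd (Finset.mem_univ i) h

/-- A unitary upper triangular matrix with positive real diagonal is `1`. -/
lemma unitary_tri_eq_one {n : ℕ} (u : Matrix (Fin n) (Fin n) ℂ)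
    (htri : u.BlockTriangular (id : Fin n → Fin n))
    (hu : uᴴ * u = 1)
    (hd : ∀ i, 0 < (u i i).re ∧ (u i i).im = 0) : u = 1 := by
  have : Invertible u := invertibleOfLeftInverse u uᴴ hu
  have hinv : u⁻¹ = uᴴ := inv_eq_left_inv hu
  have htri' : (u⁻¹).BlockTriangular (id : Fin n → Fin n) :=
    blockTriangular_inv_of_blockTriangular htri
  rw [hinv] at htri'
  -- u is diagonal
  have hdiag : ∀ i j : Fin n, i ≠ j → u i j = 0 := by
    intro i j hij
    rcases lt_or_gt_of_ne hij with h | h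
    · have := htri' (show (id i : Fin n) < id j from h)
      rw [conjTranspose_apply] at this
      exact star_eq_zero.mp this
    · exact htri (show (id j : Fin n) < id i from h)
  ext i j
  by_cases hij : i = j
  · subst hij
    have h1 : (uᴴ * u) i i = (1 : Matrix (Fin n) (Fin n) ℂ) i i := by rw [hu]
    rw [mul_apply, one_apply_eq] at h1
    have h2 : ∑ k, uᴴ i k * u k i = star (u i i) * u i i := by
      apply Finset.sum_eq_single
      · intro k _ hk
        rw [hdiag k i hk, mul_zero]
      · intro h; exact absurd (Finset.mem_univ i) h
    rw [h2] at h1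
    obtain ⟨hre, him⟩ := hd i
    have hz : u i i = ((u i i).re : ℂ) := by rw [Complex.ext_iff]; simp [him]
    rw [hz] at h1 ⊢
    rw [one_apply_eq]
    have : ((u i i).re : ℂ) * ((u i i).re : ℂ) = 1 := by
      rwa [Complex.star_def, Complex.conj_ofReal] at h1
    have hr : (u i i).re * (u i i).re = 1 := by
      exact_mod_cast this
    have : (u i i).re = 1 := by nlinarith
    rw [this]; norm_num
  · rw [hdiag i j hij, one_apply_ne hij]

/-- Lemma 4.2 (matrix instance): the left dressing action of `γᴴ` coincides with
that of `γ⁻¹`, i.e. the unitary factors of the Iwasawa decompositions of `γ⁻¹g`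
(in `U(n)·B₊`) and of `γᴴg` (in `U(n)·B₋`) agree. -/
theorem stmt_2 (n : ℕ) (g γ g₁ b₁ g₂ b₂ : Matrix (Fin n) (Fin n) ℂ)
    (hg : gᴴ * g = 1)
    (hγ : IsUnit γ)
    (hγtri : γ.BlockTriangular (id : Fin n → Fin n))
    (hγdiag : ∀ i, 0 < (γ i i).re ∧ (γ i i).im = 0)
    (hg₁ : g₁ᴴ * g₁ = 1)
    (hb₁tri : b₁.BlockTriangular (id : Fin n → Fin n))
    (hb₁diag : ∀ i, 0 < (b₁ i i).re ∧ (b₁ i i).im = 0)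
    (h₁ : γ⁻¹ * g = g₁ * b₁)
    (hg₂ : g₂ᴴ * g₂ = 1)
    (hb₂tri : b₂ᵀ.BlockTriangular (id : Fin n → Fin n))
    (hb₂diag : ∀ i, 0 < (b₂ i i).re ∧ (b₂ i i).im = 0)
    (h₂ : γᴴ * g = g₂ * b₂) :
    g₁ = g₂ := by
  -- basic invertibility facts
  have hdet₁ : IsUnit b₁.det := by
    rw [det_of_upperTriangular hb₁tri, isUnit_iff_ne_zero]
    apply Finset.prod_ne_zero_iff.mpr
    intro i _ h
    have := (hb₁diag i).1
    rw [h] at this; simp at this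
  have hdet₂ : IsUnit b₂.det := by
    rw [← det_transpose, det_of_upperTriangular hb₂tri, isUnit_iff_ne_zero]
    apply Finset.prod_ne_zero_iff.mpr
    intro i _ h
    rw [transpose_apply] at h
    have := (hb₂diag i).1
    rw [h] at this; simp at this
  have hb₁unit : IsUnit b₁ := (isUnit_iff_isUnit_det b₁).mpr hdet₁
  have hb₂unit : IsUnit b₂ := (isUnit_iff_isUnit_det b₂).mpr hdet₂
  have inv₁ : Invertible b₁ := hb₁unit.invertible
  have inv₂ : Invertible b₂ := hb₂unit.invertible
  have inv₂H : Invertible b₂ᴴ := invertibleConjTranspose b₂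
  have hγγ : γ * γ⁻¹ = 1 := mul_nonsing_inv γ ((isUnit_iff_isUnit_det γ).mp hγ)
  -- b₂ᴴ is upper triangular
  have htb₂H : b₂ᴴ.BlockTriangular (id : Fin n → Fin n) := by
    intro i j h
    have := hb₂tri h
    rw [transpose_apply] at this
    rw [conjTranspose_apply, this, star_zero]
  -- the key identity
  have e1 : b₂ᴴ * g₂ᴴ = gᴴ * γ := by
    rw [← conjTranspose_mul, ← h₂, conjTranspose_mul, conjTranspose_conjTranspose]
  have key : b₂ᴴ * (g₂ᴴ * g₁ * b₁) = 1 := by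
    have ha : b₂ᴴ * (g₂ᴴ * g₁ * b₁) = (b₂ᴴ * g₂ᴴ) * (g₁ * b₁) := by
      simp only [Matrix.mul_assoc]
    rw [ha, e1, ← h₁, Matrix.mul_assoc gᴴ γ _, ← Matrix.mul_assoc γ γ⁻¹ g, hγγ,
      Matrix.one_mul, hg]
  -- express u := g₂ᴴ * g₁ as a product of upper triangular matrices
  have h3 : b₂ᴴ⁻¹ = g₂ᴴ * g₁ * b₁ := inv_eq_right_inv key
  have hu_eq : g₂ᴴ * g₁ = b₂ᴴ⁻¹ * b₁⁻¹ := by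
    rw [h3, Matrix.mul_assoc, mul_nonsing_inv b₁ hdet₁, Matrix.mul_one]
  have htu : (g₂ᴴ * g₁).BlockTriangular (id : Fin n → Fin n) := by
    rw [hu_eq]
    exact (blockTriangular_inv_of_blockTriangular htb₂H).mul
      (blockTriangular_inv_of_blockTriangular hb₁tri)
  -- diagonal positivity of u
  have hdpos : ∀ i, 0 < ((g₂ᴴ * g₁) i i).re ∧ ((g₂ᴴ * g₁) i i).im = 0 := by
    intro i
    have e := congrFun (congrFun key i) i
    rw [diag_mul_tri _ _ htb₂H (htu.mul hb₁tri), diag_mul_tri _ _ htu hb₁tri,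
      one_apply_eq, conjTranspose_apply] at e
    obtain ⟨hr, hri⟩ := hb₂diag i
    obtain ⟨hs, hsi⟩ := hb₁diag i
    rw [Complex.ext_iff] at e
    simp only [Complex.mul_re, Complex.mul_im, Complex.star_def, Complex.conj_re,
      Complex.conj_im, Complex.one_re, Complex.one_im, hri, hsi, neg_zero, zero_mul,
      mul_zero, sub_zero, add_zero, zero_add, zero_sub, neg_eq_zero] at e
    obtain ⟨e1', e2'⟩ := e
    set x := ((g₂ᴴ * g₁) i i).re
    set y := ((g₂ᴴ * g₁) i i).im
    constructor
    · nlinarith [mul_pos hr hs]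
    · nlinarith [mul_pos hr hs, sq_nonneg y]
  -- u is unitary
  have huu : (g₂ᴴ * g₁)ᴴ * (g₂ᴴ * g₁) = 1 := by
    rw [conjTranspose_mul, conjTranspose_conjTranspose, Matrix.mul_assoc,
      ← Matrix.mul_assoc g₂ g₂ᴴ g₁, mul_eq_one_comm.mp hg₂, Matrix.one_mul, hg₁]
  have hu1 : g₂ᴴ * g₁ = 1 := unitary_tri_eq_one _ htu huu hdpos
  calc g₁ = (g₂ * g₂ᴴ) * g₁ := by rw [mul_eq_one_comm.mp hg₂, Matrix.one_mul]
    _ = g₂ * (g₂ᴴ * g₁) := by rw [Matrix.mul_assoc]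
    _ = g₂ := by rw [hu1, Matrix.mul_one]
end

section
/- Let E be a finite-dimensional real normed vector space, U ⊆ E an open set, and for each p ∈ U let N(p) : E → E be a linear map. Let M, M⁺, M⁻ : U → Mₙ(ℂ) be differentiable maps, and k, r ∈ ℂ, such that for all p ∈ U: dM⁺_p + dM⁻_p = k·dM_p, and for all tangent vectors v ∈ E: dM_p(N(p)v) = (dM⁻_p v)·M(p) + M(p)·(dM⁺_p v) + r·(dM_p v). Let m : U → ℂ be a differentiable function, α ≥ 1 an integer, and suppose there are differentiable functions c₀,…,c_{n−α} : U → ℂ such that for every p ∈ U the characteristic polynomial of M(p) factors as det(x·1 − M(p)) = (x − m(p))^α · (Σ_j c_j(p) x^j) with Σ_j c_j(p) m(p)^j ≠ 0 (i.e., m(p) is an eigenvalue of M(p) of constant algebraic multiplicity α). Then for all p ∈ U and all v ∈ E: dm_p(N(p)v) = (k·m(p) + r)·dm_p(v). -/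
/-!
Differentiating `det (t - M) = (t - m)^α Q(t)` along `w` gives, by Jacobi's formula,
`tr (adj (t - M) · dM w) = α (t - m)^(α-1) dm(w) Q(t) - (t - m)^α R_w(t)`, where `R_w` is the
derivative of `Q` along `w`. Writing `M = t - (t - M)` in the master equation and using
`adj A · A = A · adj A = det A` gives
`tr (adj (t - M) · dM (N v)) = (k t + r) tr (adj (t - M) · dM v) - k det (t - M) tr (dM v)`.
The last term is divisible by `(t - m)^α`, so comparing the terms of order `(t - m)^(α-1)` at
`t = m`, where `Q(m) ≠ 0`, gives `dm (N v) = (k m + r) dm v`.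
-/

open Matrix Polynomial Filter Topology

attribute [local instance] Matrix.normedAddCommGroup Matrix.normedSpace

section Algebra

variable {R ι : Type*} [CommRing R] [Fintype ι] [DecidableEq ι]

theorem Matrix.det_updateRow_eq_vecMul_adjugate (A : Matrix ι ι R) (i : ι) (b : ι → R) :
    (A.updateRow i b).det = (b ᵥ* adjugate A) i := by
  rw [← cramer_transpose_apply, cramer_eq_adjugate_mulVec, ← adjugate_transpose, mulVec_transpose]

theorem Matrix.trace_adjugate_mul_mul_self (A B : Matrix ι ι R) :
    trace (adjugate A * (B * A)) = det A * trace B := by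
  rw [← mul_assoc, trace_mul_comm, ← mul_assoc, mul_adjugate, smul_mul, one_mul, trace_smul,
    smul_eq_mul]

theorem Matrix.trace_adjugate_mul_self_mul (A B : Matrix ι ι R) :
    trace (adjugate A * (A * B)) = det A * trace B := by
  rw [← mul_assoc, adjugate_mul, smul_mul, one_mul, trace_smul, smul_eq_mul]

theorem Matrix.trace_adjugate_mul_master (M B Bp Bm : Matrix ι ι R) (t k r : R)
    (hsum : Bp + Bm = k • B) :
    trace (adjugate (scalar ι t - M) * (Bm * M + M * Bp + r • B)) =
      (k * t + r) * trace (adjugate (scalar ι t - M) * B) -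
        k * det (scalar ι t - M) * trace B := by
  set A := scalar ι t - M
  have hM : M = scalar ι t - A := (sub_sub_cancel _ _).symm
  rw [hM]
  have hexpand : adjugate A * (Bm * (scalar ι t - A) + (scalar ι t - A) * Bp + r • B) =
      (t • (adjugate A * (Bp + Bm)) + r • (adjugate A * B)) - adjugate A * (Bm * A) -
        adjugate A * (A * Bp) := by
    simp only [scalar_apply, ← smul_one_eq_diagonal, mul_add, mul_sub, sub_mul, Matrix.smul_mul,
      Matrix.mul_smul, one_mul, mul_one, smul_add]
    abel
  have htrace : trace Bp + trace Bm = k * trace B := by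
    rw [← trace_add, hsum, trace_smul, smul_eq_mul]
  rw [hexpand, hsum, trace_sub, trace_sub, trace_add, trace_smul, trace_smul, mul_smul_comm,
    trace_smul, trace_adjugate_mul_mul_self, trace_adjugate_mul_self_mul]
  simp only [smul_eq_mul]
  linear_combination (-det A) * htrace

theorem Polynomial.eval_eq_zero_of_forall_pow_mul_eq_pow_succ_mul [IsDomain R] [Infinite R]
    {P S : R[X]} {a : R} {n : ℕ}
    (h : ∀ t, (t - a) ^ n * P.eval t = (t - a) ^ (n + 1) * S.eval t) : P.eval a = 0 := by
  have hpoly : (X - C a) ^ n * P = (X - C a) ^ n * ((X - C a) * S) :=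
    Polynomial.funext fun t => by simpa [pow_succ, mul_assoc] using h t
  rw [mul_left_cancel₀ (pow_ne_zero _ (X_sub_C_ne_zero a)) hpoly]
  simp

end Algebra

section Calculus

variable {𝕜 𝕜' E ι : Type*} [NontriviallyNormedField 𝕜] [NontriviallyNormedField 𝕜']
  [NormedAlgebra 𝕜 𝕜'] [NormedAddCommGroup E] [NormedSpace 𝕜 E] [Fintype ι] [DecidableEq ι]

theorem HasFDerivAt.eval_sum_C_mul_X_pow {s : Finset ℕ} {c : ℕ → E → 𝕜'}
    {c' : ℕ → E →L[𝕜] 𝕜'} {p : E} (hc : ∀ j ∈ s, HasFDerivAt (c j) (c' j) p) (t : 𝕜') :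
    HasFDerivAt (fun q => (∑ j ∈ s, C (c j q) * X ^ j).eval t) (∑ j ∈ s, t ^ j • c' j) p := by
  simp only [eval_finsetSum, eval_mul, eval_C, eval_pow, eval_X]
  exact HasFDerivAt.fun_sum fun j hj => (hc j hj).mul_const _

variable [CompleteSpace 𝕜']

noncomputable def Matrix.traceMulLeftCLM (B : Matrix ι ι 𝕜') : Matrix ι ι 𝕜' →L[𝕜'] 𝕜' :=
  LinearMap.toContinuousLinearMap ((traceLinearMap ι 𝕜' 𝕜').comp (LinearMap.mulLeft 𝕜' B))

@[simp]
theorem Matrix.traceMulLeftCLM_apply (B H : Matrix ι ι 𝕜') :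
    traceMulLeftCLM B H = trace (B * H) := rfl

theorem Matrix.hasFDerivAt_det (A : Matrix ι ι 𝕜') :
    HasFDerivAt det (traceMulLeftCLM (adjugate A)) A := by
  let detCML : ContinuousMultilinearMap 𝕜' (fun _ : ι => ι → 𝕜') 𝕜' :=
    ⟨(detRowAlternating : (ι → 𝕜') [⋀^ι]→ₗ[𝕜'] 𝕜').toMultilinearMap, continuous_id.matrix_det⟩
  refine (detCML.hasFDerivAt A).congr_fderiv ?_
  refine ContinuousLinearMap.ext fun (H : Matrix ι ι 𝕜') => ?_
  refine (ContinuousMultilinearMap.linearDeriv_apply detCML A H).trans ?_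
  change ∑ i, (A.updateRow i (H i)).det = trace (adjugate A * H)
  simp only [det_updateRow_eq_vecMul_adjugate, trace_mul_comm (adjugate A)]
  rfl

theorem HasFDerivAt.eval_charpoly {f : E → Matrix ι ι 𝕜'} {f' : E →L[𝕜] Matrix ι ι 𝕜'} {p : E}
    (hf : HasFDerivAt f f' p) (t : 𝕜') :
    HasFDerivAt (fun q => (f q).charpoly.eval t)
      (-((traceMulLeftCLM (adjugate (scalar ι t - f p))).restrictScalars 𝕜).comp f') p := by
  simp only [Matrix.eval_charpoly]
  rw [← ContinuousLinearMap.comp_neg]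
  exact ((hasFDerivAt_det _).restrictScalars 𝕜).comp p (hf.const_sub (scalar ι t))

theorem trace_adjugate_mul_fderiv_of_charpoly_eq {f : E → Matrix ι ι 𝕜'}
    {f' : E →L[𝕜] Matrix ι ι 𝕜'} {m : E → 𝕜'} {m' : E →L[𝕜] 𝕜'} {s : Finset ℕ}
    {c : ℕ → E → 𝕜'} {c' : ℕ → E →L[𝕜] 𝕜'} {p : E} {α : ℕ} (hf : HasFDerivAt f f' p)
    (hm : HasFDerivAt m m' p) (hc : ∀ j ∈ s, HasFDerivAt (c j) (c' j) p)
    (hfact : ∀ᶠ q in 𝓝 p, (f q).charpoly = (X - C (m q)) ^ α * ∑ j ∈ s, C (c j q) * X ^ j)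
    (w : E) (t : 𝕜') :
    trace (adjugate (scalar ι t - f p) * f' w) =
      α * (t - m p) ^ (α - 1) * m' w * (∑ j ∈ s, C (c j p) * X ^ j).eval t -
        (t - m p) ^ α * (∑ j ∈ s, C (c' j w) * X ^ j).eval t := by
  have hprod := ((hm.const_sub t).pow α).mul (HasFDerivAt.eval_sum_C_mul_X_pow hc t)
  have hfactored : HasFDerivAt (fun q => (f q).charpoly.eval t) _ p :=
    hprod.congr_of_eventuallyEq <| hfact.mono fun q hq => by
      simp only [hq, Pi.mul_apply, eval_mul, eval_pow, eval_sub, eval_X, eval_C]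
  have happly := congrArg (· w) ((hf.eval_charpoly t).unique hfactored)
  simp only [_root_.neg_apply, ContinuousLinearMap.comp_apply,
    ContinuousLinearMap.coe_restrictScalars', traceMulLeftCLM_apply, eval_finsetSum, eval_mul,
    eval_C, eval_pow, eval_X, nsmul_eq_mul, smul_neg, _root_.add_apply, _root_.smul_apply,
    _root_.sum_apply, smul_eq_mul] at happly
  simp only [eval_finsetSum, eval_mul, eval_C, eval_pow, eval_X]
  rw [Finset.sum_congr rfl fun j _ => mul_comm (t ^ j) (c' j w)] at happly
  linear_combination -happly

end Calculus

theorem stmt_4_general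
    {E : Type*} [NormedAddCommGroup E] [NormedSpace ℝ E]
    {n : ℕ} (U : Set E) (hU : IsOpen U)
    (N : E → E →ₗ[ℝ] E)
    (M : E → Matrix (Fin n) (Fin n) ℂ)
    (dM dMp dMm : E → E →L[ℝ] Matrix (Fin n) (Fin n) ℂ)
    (hM : ∀ p ∈ U, HasFDerivAt M (dM p) p)
    (k r : ℂ)
    (hsum : ∀ p ∈ U, ∀ v : E, dMp p v + dMm p v = k • dM p v)
    (hmaster : ∀ p ∈ U, ∀ v : E,
        dM p (N p v) = dMm p v * M p + M p * dMp p v + r • dM p v)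
    (m : E → ℂ) (dm : E → E →L[ℝ] ℂ)
    (hm : ∀ p ∈ U, HasFDerivAt m (dm p) p)
    (α : ℕ) (hα : 1 ≤ α)
    (c : ℕ → E → ℂ) (dc : ℕ → E → E →L[ℝ] ℂ)
    (hc : ∀ j ≤ n - α, ∀ p ∈ U, HasFDerivAt (c j) (dc j p) p)
    (hfact : ∀ p ∈ U,
        (M p).charpoly = (Polynomial.X - Polynomial.C (m p)) ^ α *
          (∑ j ∈ Finset.range (n - α + 1), Polynomial.C (c j p) * Polynomial.X ^ j))
    (hnonzero : ∀ p ∈ U, (∑ j ∈ Finset.range (n - α + 1), c j p * m p ^ j) ≠ 0) :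
    ∀ p ∈ U, ∀ v : E, dm p (N p v) = (k * m p + r) * dm p v := by
  intro p hp v
  obtain ⟨β, rfl⟩ := Nat.exists_eq_add_of_le' hα
  set Q := ∑ j ∈ Finset.range (n - (β + 1) + 1), C (c j p) * X ^ j
  set R := fun w => ∑ j ∈ Finset.range (n - (β + 1) + 1), C (dc j p w) * X ^ j
  have hderiv := trace_adjugate_mul_fderiv_of_charpoly_eq (hM p hp) (hm p hp)
    (fun j hj => hc j (by simp only [Finset.mem_range] at hj; omega) p hp)
    (eventually_of_mem (hU.mem_nhds hp) hfact)
  have hdet (t : ℂ) : det (scalar _ t - M p) = (t - m p) ^ (β + 1) * Q.eval t := by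
    rw [← Matrix.eval_charpoly, hfact p hp, eval_mul, eval_pow, eval_sub, eval_X, eval_C]
  have hvanish := eval_eq_zero_of_forall_pow_mul_eq_pow_succ_mul (a := m p) (n := β)
    (P := C ((β + 1 : ℕ) : ℂ) * Q * (C (dm p (N p v)) - (C k * X + C r) * C (dm p v)))
    (S := R (N p v) - (C k * X + C r) * R v - C (k * trace (dM p v)) * Q) fun t => by
      have htrace := trace_adjugate_mul_master (M p) (dM p v) (dMp p v) (dMm p v) t k r
        (hsum p hp v)
      rw [← hmaster p hp v, hderiv, hderiv, hdet, Nat.add_sub_cancel] at htrace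
      simp only [eval_mul, eval_sub, eval_add, eval_C, eval_X]
      linear_combination htrace
  have hQ : Q.eval (m p) ≠ 0 := by
    simpa [Q, eval_finsetSum] using hnonzero p hp
  simpa only [eval_mul, eval_sub, eval_add, eval_C, eval_X, mul_eq_zero, Nat.cast_eq_zero,
    Nat.succ_ne_zero, hQ, false_or, sub_eq_zero] using hvanish

/-- Proposition 6.4 (reduction of the momentum map), in a local chart: if a matrix
valued map `M` solves the master equation `N*dM = dM⁻·M + M·dM⁺ + r·dM` with
`dM⁺ + dM⁻ = k·dM`, then any eigenvalue `m` of `M` of constant algebraic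
multiplicity satisfies `N*dm = (k·m + r)·dm`. -/
theorem stmt_4
    {E : Type*} [NormedAddCommGroup E] [NormedSpace ℝ E] [FiniteDimensional ℝ E]
    {n : ℕ} (U : Set E) (hU : IsOpen U)
    (N : E → E →ₗ[ℝ] E)
    (M Mplus Mminus : E → Matrix (Fin n) (Fin n) ℂ)
    (dM dMp dMm : E → E →L[ℝ] Matrix (Fin n) (Fin n) ℂ)
    (hM : ∀ p ∈ U, HasFDerivAt M (dM p) p)
    (hMp : ∀ p ∈ U, HasFDerivAt Mplus (dMp p) p)
    (hMm : ∀ p ∈ U, HasFDerivAt Mminus (dMm p) p)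
    (k r : ℂ)
    (hsum : ∀ p ∈ U, ∀ v : E, dMp p v + dMm p v = k • dM p v)
    (hmaster : ∀ p ∈ U, ∀ v : E,
        dM p (N p v) = dMm p v * M p + M p * dMp p v + r • dM p v)
    (m : E → ℂ) (dm : E → E →L[ℝ] ℂ)
    (hm : ∀ p ∈ U, HasFDerivAt m (dm p) p)
    (α : ℕ) (hα : 1 ≤ α)
    (c : ℕ → E → ℂ) (dc : ℕ → E → E →L[ℝ] ℂ)
    (hc : ∀ j ≤ n - α, ∀ p ∈ U, HasFDerivAt (c j) (dc j p) p)
    (hfact : ∀ p ∈ U,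
        (M p).charpoly = (Polynomial.X - Polynomial.C (m p)) ^ α *
          (∑ j ∈ Finset.range (n - α + 1), Polynomial.C (c j p) * Polynomial.X ^ j))
    (hnonzero : ∀ p ∈ U, (∑ j ∈ Finset.range (n - α + 1), c j p * m p ^ j) ≠ 0) :
    ∀ p ∈ U, ∀ v : E, dm p (N p v) = (k * m p + r) * dm p v :=
  stmt_4_general U hU N M dM dMp dMm hM k r hsum hmaster m dm hm α hα c dc hc hfact hnonzero
end

section
/- Let Λ be a real diagonal n×n matrix and let U be an n×n complex unitary matrix that is symmetric (Uᵗ = U) and commutes with Λ (UΛ = ΛU). Then there exists an n×n complex unitary matrix k that is symmetric (kᵗ = k), commutes with Λ (kΛ = Λk), and satisfies k² = U. -/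
/-! A unitary matrix has finite spectrum on the unit circle; on a finite set the principal
branch `z ↦ z ^ (1/2)` is continuous, so the continuous functional calculus gives a unitary square
root of `U`, and it agrees with an interpolating polynomial `q` on the spectrum. Being `q(U)`, the
root inherits symmetry (`q(U)ᵀ = q(Uᵀ)`) and commutation with `Λ`. -/

open Matrix Polynomial

theorem cfc_eq_aeval_of_finite_spectrum {R A : Type*} {p : A → Prop} [Field R] [StarRing R]
    [MetricSpace R] [IsTopologicalRing R] [ContinuousStar R] [TopologicalSpace A] [Ring A]
    [StarRing A] [Algebra R A] [ContinuousFunctionalCalculus R A p]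
    (f : R → R) (a : A) (hs : (spectrum R a).Finite) (ha : p a := by cfc_tac) :
    ∃ q : R[X], cfc f a = aeval a q := by
  classical
  refine ⟨Lagrange.interpolate hs.toFinset id f, ?_⟩
  rw [← cfc_polynomial _ a]
  refine cfc_congr fun x hx => ?_
  exact (Lagrange.eval_interpolate_at_node f (Set.injOn_id _) (hs.mem_toFinset.mpr hx)).symm

theorem cfc_cpow_inv_pow {A : Type*} {p : A → Prop} [Ring A] [StarRing A] [TopologicalSpace A]
    [Algebra ℂ A] [ContinuousFunctionalCalculus ℂ A p] {n : ℕ} (hn : n ≠ 0) (a : A)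
    (hf : ContinuousOn (fun z : ℂ => z ^ (n⁻¹ : ℂ)) (spectrum ℂ a)) (ha : p a := by cfc_tac) :
    cfc (fun z : ℂ => z ^ (n⁻¹ : ℂ)) a ^ n = a := by
  calc _ = cfc (fun z : ℂ => (z ^ (n⁻¹ : ℂ)) ^ n) a := (cfc_pow _ n a hf ha).symm
    _ = cfc id a := cfc_congr fun z _ => Complex.cpow_nat_inv_pow z hn
    _ = a := cfc_id ℂ a ha

theorem cfc_cpow_inv_mem_unitary {A : Type*} [CStarAlgebra A] {u : A} (hu : u ∈ unitary A)
    (n : ℕ) (hf : ContinuousOn (fun z : ℂ => z ^ (n⁻¹ : ℂ)) (spectrum ℂ u)) :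
    cfc (fun z : ℂ => z ^ (n⁻¹ : ℂ)) u ∈ unitary A := by
  have := isStarNormal_of_mem_unitary hu
  rw [cfc_unitary_iff _ u]
  intro x hx
  have hx1 : ‖x‖ = 1 := by simpa using spectrum.subset_circle_of_unitary hu hx
  rw [RCLike.star_def, Complex.conj_mul', Complex.norm_cpow_inv_nat, hx1]
  simp

theorem Commute.aeval_left {R A : Type*} [CommSemiring R] [Semiring A] [Algebra R A] {a b : A}
    (h : Commute a b) (q : R[X]) : Commute (aeval a q) b := by
  induction q using Polynomial.induction_on' with
  | add q r hq hr => simpa using hq.add_left hr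
  | monomial k c =>
    simpa [aeval_monomial] using (Algebra.commute_algebraMap_left c b).mul_left (h.pow_left k)

theorem Matrix.transpose_aeval {n R : Type*} [Fintype n] [DecidableEq n] [CommSemiring R]
    (A : Matrix n n R) (q : R[X]) : (aeval A q)ᵀ = aeval Aᵀ q := by
  simp [aeval_eq_sum_range, transpose_sum, transpose_smul, transpose_pow]

open scoped Matrix.Norms.L2Operator in
theorem Matrix.exists_aeval_mem_unitary_sq_eq {n : Type*} [Fintype n] [DecidableEq n]
    {U : Matrix n n ℂ} (hU : U ∈ unitary (Matrix n n ℂ)) :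
    ∃ q : ℂ[X], aeval U q ∈ unitary (Matrix n n ℂ) ∧ aeval U q ^ 2 = U := by
  have := isStarNormal_of_mem_unitary hU
  have hcont : ContinuousOn (fun z : ℂ => z ^ ((2 : ℕ)⁻¹ : ℂ)) (spectrum ℂ U) :=
    U.finite_spectrum.continuousOn _
  obtain ⟨q, hq⟩ := cfc_eq_aeval_of_finite_spectrum _ U U.finite_spectrum
  exact ⟨q, hq ▸ cfc_cpow_inv_mem_unitary hU 2 hcont, hq ▸ cfc_cpow_inv_pow two_ne_zero U hcont⟩

/-- Key step in Theorem 8.1: a symmetric unitary matrix commuting with a real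
diagonal matrix `Λ` has a symmetric unitary square root commuting with `Λ`. -/
theorem stmt_8 (n : ℕ) (l : Fin n → ℝ)
    (U : Matrix (Fin n) (Fin n) ℂ)
    (hU : Uᴴ * U = 1) (hsym : Uᵀ = U)
    (hcomm : U * Matrix.diagonal (fun i => (l i : ℂ)) =
      Matrix.diagonal (fun i => (l i : ℂ)) * U) :
    ∃ k : Matrix (Fin n) (Fin n) ℂ,
      kᴴ * k = 1 ∧ kᵀ = k ∧
      k * Matrix.diagonal (fun i => (l i : ℂ)) =
        Matrix.diagonal (fun i => (l i : ℂ)) * k ∧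
      k * k = U := by
  obtain ⟨q, hunitary, hsq⟩ :=
    exists_aeval_mem_unitary_sq_eq (U := U) ⟨hU, mul_eq_one_comm.mp hU⟩
  exact ⟨aeval U q, hunitary.1, by rw [transpose_aeval, hsym], (Commute.aeval_left hcomm q).eq,
    (sq _).symm.trans hsq⟩
end

section
/- Let X be a 2n×2n real antisymmetric matrix (Xᵗ = −X) with X² = −(1/4)·1₂ₙ. Write X in n×n blocks as X = [[X₁₁, X₁₂],[X₂₁, X₂₂]] and suppose X₁₁ + X₂₂ = 0 and X₁₂ − X₂₁ = Λ, where Λ is a real diagonal n×n matrix. Set A = X₁₁ and B = (X₁₂ + X₂₁)/2. Then A and B are antisymmetric, AB = BA, AΛ = ΛA, BΛ = ΛB, and A² + B² = (Λ² − 1)/4. -/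
open Matrix

/-- Structural claim in Theorem 9.1: a point `X` of the `SO(2n)`-orbit of `ρ_φ`
(`Xᵀ = −X`, `X² = −1/4`) in the fiber of the `u(n)`-moment map over `iΛ` has the
normal form `[[A, B+Λ/2],[B−Λ/2, −A]]` with `A`, `B` antisymmetric, commuting
with each other and with `Λ`, and `A² + B² = (Λ² − 1)/4`. -/
theorem stmt_10 (n : ℕ) (X : Matrix (Fin n ⊕ Fin n) (Fin n ⊕ Fin n) ℝ)
    (l : Fin n → ℝ)
    (hanti : Xᵀ = -X)
    (hsq : X * X = -((1/4 : ℝ) • (1 : Matrix (Fin n ⊕ Fin n) (Fin n ⊕ Fin n) ℝ)))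
    (h11 : X.toBlocks₁₁ + X.toBlocks₂₂ = 0)
    (h12 : X.toBlocks₁₂ - X.toBlocks₂₁ = Matrix.diagonal l)
    (A B L : Matrix (Fin n) (Fin n) ℝ)
    (hA : A = X.toBlocks₁₁)
    (hB : B = (1/2 : ℝ) • (X.toBlocks₁₂ + X.toBlocks₂₁))
    (hL : L = Matrix.diagonal l) :
    Aᵀ = -A ∧ Bᵀ = -B ∧ A * B = B * A ∧ A * L = L * A ∧ B * L = L * B ∧
      A * A + B * B = (1/4 : ℝ) • (L * L - 1) := by
  set a := X.toBlocks₁₁ with ha'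
  set b := X.toBlocks₁₂ with hb'
  set c := X.toBlocks₂₁ with hc'
  set d := X.toBlocks₂₂ with hd'
  have hX : X = fromBlocks a b c d := (fromBlocks_toBlocks X).symm
  rw [hX, fromBlocks_transpose] at hanti
  have hanti' : fromBlocks aᵀ cᵀ bᵀ dᵀ = fromBlocks (-a) (-b) (-c) (-d) := by
    rw [hanti]; ext i j; rcases i with i | i <;> rcases j with j | j <;>
      simp [fromBlocks, Matrix.neg_apply]
  obtain ⟨haT, hcT, hbT, -⟩ := fromBlocks_inj.mp hanti'
  have hd : d = -a := by linear_combination (norm := abel) h11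
  rw [hX, fromBlocks_multiply] at hsq
  have hone : -((1/4 : ℝ) • (1 : Matrix (Fin n ⊕ Fin n) (Fin n ⊕ Fin n) ℝ)) =
      fromBlocks (-((1/4 : ℝ) • 1)) 0 0 (-((1/4 : ℝ) • 1)) := by
    rw [← fromBlocks_one]
    ext i j; rcases i with i | i <;> rcases j with j | j <;>
      simp [fromBlocks, Matrix.neg_apply, Matrix.smul_apply]
  rw [hone] at hsq
  obtain ⟨E11, E12, E21, E22⟩ := fromBlocks_inj.mp hsq
  rw [hd] at E12 E21 E22
  -- E12 : a * b + b * -a = 0, E21 : c * a + -a * c = 0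
  have hab : a * b = b * a := by
    have h : a * b - b * a = 0 := by
      calc a * b - b * a = a * b + b * -a := by noncomm_ring
      _ = 0 := E12
    exact sub_eq_zero.mp h
  have hac : a * c = c * a := by
    have h : c * a - a * c = 0 := by
      calc c * a - a * c = c * a + -a * c := by noncomm_ring
      _ = 0 := E21
    exact (sub_eq_zero.mp h).symm
  have hcb : c * b = b * c := by
    have h1 : c * b + a * a = b * c + a * a := by
      rw [show c * b + a * a = c * b + -a * -a by noncomm_ring, E22, ← E11]
      exact add_comm _ _
    exact add_right_cancel h1
  subst hA hB hL
  rw [← h12]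
  refine ⟨by rw [haT], ?_, ?_, ?_, ?_, ?_⟩
  · rw [transpose_smul, transpose_add, hbT, hcT]
    module
  · rw [mul_smul_comm, smul_mul_assoc, mul_add, add_mul, hab, hac]
  · rw [mul_sub, sub_mul, hab, hac]
  · rw [smul_mul_assoc, mul_smul_comm]
    congr 1
    simp only [add_mul, mul_add, sub_mul, mul_sub, hcb]
    noncomm_ring
  · simp only [smul_mul_assoc, mul_smul_comm, smul_smul, mul_add, add_mul, mul_sub, sub_mul,
      smul_add, smul_sub, hcb]
    linear_combination (norm := module) E11
end

section
/- For real numbers a and b, the following are equivalent: (i) there exist vectors c₁, c₂ ∈ ℝ⁴ with |c₁| = |c₂| = 1 and ⟨c₁, c₂⟩ = 0 such that a = c₁(1)c₂(2) − c₁(2)c₂(1) and b = c₁(3)c₂(4) − c₁(4)c₂(3); (ii) |a| ≤ 1 and b² ≤ (1 − |a|)². -/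
open scoped RealInnerProductSpace

private lemma key_ineq (x0 x1 x2 x3 y0 y1 y2 y3 : ℝ)
    (h1 : x0^2 + x1^2 + x2^2 + x3^2 = 1)
    (h2 : y0^2 + y1^2 + y2^2 + y3^2 = 1)
    (_h3 : x0*y0 + x1*y1 + x2*y2 + x3*y3 = 0) :
    |x0*y1 - x1*y0| + |x2*y3 - x3*y2| ≤ 1 := by
  have hp : (x0*y1 - x1*y0 + (x2*y3 - x3*y2))^2 ≤ 1 := by
    nlinarith [sq_nonneg (x0*y0 + x1*y1 + x2*y2 + x3*y3),
      sq_nonneg (x0*y2 - x2*y0 + x3*y1 - x1*y3),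
      sq_nonneg (x0*y3 - x3*y0 + x1*y2 - x2*y1), sq_nonneg (x0*y1 - x1*y0 + x2*y3 - x3*y2)]
  have hm : (x0*y1 - x1*y0 - (x2*y3 - x3*y2))^2 ≤ 1 := by
    nlinarith [sq_nonneg (x0*y0 + x1*y1 + x2*y2 + x3*y3),
      sq_nonneg (x0*y2 - x2*y0 - x3*y1 + x1*y3),
      sq_nonneg (x0*y3 - x3*y0 - x1*y2 + x2*y1)]
  rcases abs_cases (x0*y1 - x1*y0) with ⟨e1, _⟩ | ⟨e1, _⟩ <;>
    rcases abs_cases (x2*y3 - x3*y2) with ⟨e2, _⟩ | ⟨e2, _⟩ <;> rw [e1, e2] <;> nlinarith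

/-- Range computation in Theorem 10.1: the pairs `(a,b)` of the two `2×2`
determinants arising from an orthonormal pair of vectors in `ℝ⁴` are exactly
those with `|a| ≤ 1` and `b² ≤ (1 − |a|)²`. -/
theorem stmt_13 (a b : ℝ) :
    (∃ c₁ c₂ : EuclideanSpace ℝ (Fin 4),
      ‖c₁‖ = 1 ∧ ‖c₂‖ = 1 ∧ ⟪c₁, c₂⟫ = 0 ∧
      a = c₁ 0 * c₂ 1 - c₁ 1 * c₂ 0 ∧
      b = c₁ 2 * c₂ 3 - c₁ 3 * c₂ 2) ↔
    (|a| ≤ 1 ∧ b ^ 2 ≤ (1 - |a|) ^ 2) := by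
  constructor
  · rintro ⟨c₁, c₂, hn1, hn2, hi, ha, hb⟩
    have s1 : c₁ 0 ^ 2 + c₁ 1 ^ 2 + c₁ 2 ^ 2 + c₁ 3 ^ 2 = 1 := by
      have := hn1
      rw [EuclideanSpace.norm_eq] at this
      have h0 : c₁ 0 ^ 2 + c₁ 1 ^ 2 + c₁ 2 ^ 2 + c₁ 3 ^ 2 =
          ∑ i, ‖c₁ i‖ ^ 2 := by
        simp [Fin.sum_univ_four, Real.norm_eq_abs, sq_abs]
      rw [h0]; exact Real.sqrt_eq_one.mp this
    have s2 : c₂ 0 ^ 2 + c₂ 1 ^ 2 + c₂ 2 ^ 2 + c₂ 3 ^ 2 = 1 := by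
      have := hn2
      rw [EuclideanSpace.norm_eq] at this
      have h0 : c₂ 0 ^ 2 + c₂ 1 ^ 2 + c₂ 2 ^ 2 + c₂ 3 ^ 2 =
          ∑ i, ‖c₂ i‖ ^ 2 := by
        simp [Fin.sum_univ_four, Real.norm_eq_abs, sq_abs]
      rw [h0]; exact Real.sqrt_eq_one.mp this
    have s3 : c₁ 0 * c₂ 0 + c₁ 1 * c₂ 1 + c₁ 2 * c₂ 2 + c₁ 3 * c₂ 3 = 0 := by
      rw [PiLp.inner_apply] at hi
      simpa [Fin.sum_univ_four, mul_comm] using hi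
    have key := key_ineq (c₁ 0) (c₁ 1) (c₁ 2) (c₁ 3) (c₂ 0) (c₂ 1) (c₂ 2) (c₂ 3) s1 s2 s3
    rw [← ha, ← hb] at key
    have hb1 : |b| ≤ 1 - |a| := by linarith [abs_nonneg a, abs_nonneg b]
    refine ⟨by linarith [abs_nonneg b], ?_⟩
    calc b ^ 2 = |b| ^ 2 := (sq_abs b).symm
      _ ≤ (1 - |a|) ^ 2 := by
          apply sq_le_sq' <;> linarith [abs_nonneg b]
  · rintro ⟨ha1, hb1⟩
    have habs : |b| ≤ 1 - |a| := by
      nlinarith [sq_abs b, abs_nonneg b, abs_nonneg a]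
    have hsum : |a| + |b| ≤ 1 := by linarith
    have hpb : -1 ≤ a + b ∧ a + b ≤ 1 := by
      constructor <;> [nlinarith [abs_le.mp (le_refl |a|), neg_abs_le a, le_abs_self a, neg_abs_le b, le_abs_self b];
        nlinarith [le_abs_self a, le_abs_self b]]
    have hmb : -1 ≤ a - b ∧ a - b ≤ 1 := by
      constructor <;> nlinarith [neg_abs_le a, le_abs_self a, neg_abs_le b, le_abs_self b]
    set θ := (Real.arccos (a + b) + Real.arccos (a - b)) / 2 with hθ
    set φ := (Real.arccos (a - b) - Real.arccos (a + b)) / 2 with hφ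
    have hc1 : Real.cos (θ - φ) = a + b := by
      have : θ - φ = Real.arccos (a + b) := by rw [hθ, hφ]; ring
      rw [this, Real.cos_arccos hpb.1 hpb.2]
    have hc2 : Real.cos (θ + φ) = a - b := by
      have : θ + φ = Real.arccos (a - b) := by rw [hθ, hφ]; ring
      rw [this, Real.cos_arccos hmb.1 hmb.2]
    rw [Real.cos_sub] at hc1
    rw [Real.cos_add] at hc2
    refine ⟨(WithLp.equiv 2 (Fin 4 → ℝ)).symm ![Real.cos θ, 0, Real.sin θ, 0],
      (WithLp.equiv 2 (Fin 4 → ℝ)).symm ![0, Real.cos φ, 0, Real.sin φ], ?_, ?_, ?_, ?_, ?_⟩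
    · rw [EuclideanSpace.norm_eq]
      simp [Fin.sum_univ_four, Real.norm_eq_abs, sq_abs]
    · rw [EuclideanSpace.norm_eq]
      simp [Fin.sum_univ_four, Real.norm_eq_abs, sq_abs]
    · rw [PiLp.inner_apply]
      simp [Fin.sum_univ_four]
    · show a = Real.cos θ * Real.cos φ - 0 * 0
      linarith
    · show b = Real.sin θ * Real.sin φ - 0 * 0
      linarith
end

section
/- Let P and W be 2n×2n real antisymmetric matrices (Pᵗ = −P, Wᵗ = −W) with W invertible, and set N = P·W. Then for every real number λ the dimension of the kernel of N − λ·1₂ₙ is even; consequently N has at most n distinct real eigenvalues. -/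
/-!
Since `P * W - t • 1 = (P - t • W⁻¹) * W` and `P - t • W⁻¹` is again antisymmetric, the kernel
of `P * W - t • 1` has the dimension of the null space of an antisymmetric matrix. An
antisymmetric bilinear form is nondegenerate on a complement of its null space, and there its
Gram matrix `M` satisfies `det M = det Mᵀ = (-1) ^ k * det M ≠ 0`, so `k` is even: antisymmetric
matrices have even rank. In dimension `2 * n` every eigenspace is therefore even-dimensional;
eigenspaces for distinct eigenvalues are independent and the nonzero ones have dimension at
least `2`, so there are at most `n` of them.
-/

open Matrix Module

namespace LinearMap.BilinForm

theorem IsRefl.nondegenerate_restrict_of_isCompl_ker {R M : Type*} [CommRing R]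
    [AddCommGroup M] [Module R M] {B : LinearMap.BilinForm R M} (hB : B.IsRefl) {W : Submodule R M}
    (hW : IsCompl W (LinearMap.ker B)) : (B.restrict W).Nondegenerate := by
  have hBW : (B.restrict W).IsRefl := fun x y ↦ hB x y
  refine (LinearMap.IsRefl.nondegenerate_iff_separatingLeft hBW).mpr ?_
  rw [LinearMap.separatingLeft_iff_ker_eq_bot,
    ker_restrict_eq_of_codisjoint hW.codisjoint fun x _ y hy ↦ hB y x (by simp_all),
    ← Submodule.disjoint_iff_comap_eq_bot]
  exact hW.disjoint

variable {K V : Type*} [Field K] [AddCommGroup V] [Module K V] [FiniteDimensional K V]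
  {B : LinearMap.BilinForm K V}

theorem even_finrank_of_nondegenerate_of_flip_eq_neg (hK : ringChar K ≠ 2) (hB : B.flip = -B)
    (hnd : B.Nondegenerate) : Even (finrank K V) := by
  set b := Module.finBasis K V
  set M := BilinForm.toMatrix b B
  have hM : Mᵀ = -M := by
    ext i j
    simpa [M] using LinearMap.congr_fun₂ hB (b i) (b j)
  have hdet : M.det ≠ 0 := (nondegenerate_iff_det_ne_zero b).mp hnd
  have hpow : (-1 : K) ^ finrank K V = 1 := by
    have := (det_transpose M).symm
    rw [hM, det_neg, Fintype.card_fin] at this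
    exact (mul_left_eq_self₀.mp this.symm).resolve_right hdet
  exact (neg_one_pow_eq_one_iff_even (Ring.neg_one_ne_one_of_char_ne_two hK)).mp hpow

theorem even_finrank_range_of_flip_eq_neg (hK : ringChar K ≠ 2) (hB : B.flip = -B) :
    Even (finrank K (LinearMap.range B)) := by
  obtain ⟨U, hU⟩ := (LinearMap.ker B).exists_isCompl
  have hrefl : B.IsRefl := fun x y h ↦ by simpa [h] using LinearMap.congr_fun₂ hB x y
  have hUB : (B.restrict U).flip = -B.restrict U := by
    ext x y
    exact LinearMap.congr_fun₂ hB x y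
  rw [B.quotKerEquivRange.symm.finrank_eq, (Submodule.quotientEquivOfIsCompl _ U hU).finrank_eq]
  exact even_finrank_of_nondegenerate_of_flip_eq_neg hK hUB
    (hrefl.nondegenerate_restrict_of_isCompl_ker hU.symm)

end LinearMap.BilinForm

theorem Matrix.even_rank_of_transpose_eq_neg {K n : Type*} [Field K] [Fintype n] [DecidableEq n]
    (hK : ringChar K ≠ 2) {A : Matrix n n K} (hA : Aᵀ = -A) : Even A.rank := by
  have hB : (toBilin' A).flip = -toBilin' A := by
    ext v w
    simpa using congr_fun₂ hA v w
  have hfactor : toBilin' A = (dotProductEquiv K n).toLinearMap ∘ₗ toLin' Aᵀ := by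
    ext v w
    simp [toBilin'_apply']
  have := LinearMap.BilinForm.even_finrank_range_of_flip_eq_neg hK hB
  rw [hfactor, LinearMap.range_comp, LinearEquiv.finrank_map_eq] at this
  rw [← rank_transpose]
  exact this

theorem Matrix.inv_transpose_eq_neg {K n : Type*} [Field K] [Fintype n] [DecidableEq n]
    {W : Matrix n n K} (hW : Wᵀ = -W) (hdet : IsUnit W.det) : W⁻¹ᵀ = -W⁻¹ := by
  rw [transpose_nonsing_inv, hW]
  exact inv_eq_left_inv (by rw [neg_mul_neg, nonsing_inv_mul W hdet])

theorem Matrix.rank_add_finrank_ker_toLin' {K n : Type*} [Field K] [Fintype n] [DecidableEq n]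
    (A : Matrix n n K) : A.rank + finrank K (LinearMap.ker (toLin' A)) = Fintype.card n := by
  rw [rank, ← toLin'_apply', LinearMap.finrank_range_add_finrank_ker, finrank_fintype_fun_eq_card]

theorem Matrix.even_finrank_ker_mul_sub_smul_one {K n : Type*} [Field K] [Fintype n]
    [DecidableEq n] (hK : ringChar K ≠ 2) (hn : Even (Fintype.card n)) {P W : Matrix n n K}
    (hP : Pᵀ = -P) (hW : Wᵀ = -W) (hWinv : IsUnit W) (t : K) :
    Even (finrank K (LinearMap.ker (toLin' (P * W - t • 1)))) := by
  have hdet : IsUnit W.det := (isUnit_iff_isUnit_det W).mp hWinv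
  have hfactor : P * W - t • 1 = (P - t • W⁻¹) * W := by
    rw [sub_mul, smul_mul, nonsing_inv_mul W hdet]
  have hskew : (P - t • W⁻¹)ᵀ = -(P - t • W⁻¹) := by
    rw [transpose_sub, transpose_smul, hP, inv_transpose_eq_neg hW hdet, smul_neg, neg_sub',
      sub_neg_eq_add, neg_add_eq_sub]
  have hrank : (P * W - t • 1).rank = (P - t • W⁻¹).rank := by
    rw [hfactor, rank_mul_eq_left_of_isUnit_det W _ hdet]
  rw [← rank_add_finrank_ker_toLin' (P * W - t • 1), hrank] at hn
  exact (Nat.even_add.mp hn).mp (even_rank_of_transpose_eq_neg hK hskew)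

theorem iSupIndep.sum_finrank_le {ι K V : Type*} [DivisionRing K] [AddCommGroup V] [Module K V]
    [FiniteDimensional K V] {p : ι → Submodule K V} (hp : iSupIndep p) (s : Finset ι) :
    ∑ i ∈ s, finrank K (p i) ≤ finrank K V := by
  classical
  have hs : iSupIndep fun i : s ↦ p i := hp.comp Subtype.val_injective
  calc ∑ i ∈ s, finrank K (p i) = ∑ i : s, finrank K (p i) := (Finset.sum_coe_sort s _).symm
    _ = finrank K (DirectSum s fun i ↦ p i) := (Module.finrank_directSum K _).symm
    _ ≤ finrank K V := LinearMap.finrank_le_finrank_of_injective (by exact hs.dfinsupp_lsum_injective)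

theorem Module.End.card_mul_le_finrank_of_le_finrank_eigenspace {K V : Type*} [Field K]
    [AddCommGroup V] [Module K V] [FiniteDimensional K V] (f : End K V) {s : Finset K} {d : ℕ}
    (hd : ∀ t ∈ s, d ≤ finrank K (f.eigenspace t)) : s.card * d ≤ finrank K V :=
  calc s.card * d = ∑ _t ∈ s, d := by rw [Finset.sum_const, smul_eq_mul]
    _ ≤ ∑ t ∈ s, finrank K (f.eigenspace t) := Finset.sum_le_sum hd
    _ ≤ finrank K V := f.eigenspaces_iSupIndep.sum_finrank_le s

theorem Matrix.ker_toLin'_sub_smul_one {K n : Type*} [Field K] [Fintype n] [DecidableEq n]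
    (M : Matrix n n K) (t : K) :
    LinearMap.ker (toLin' (M - t • 1)) = Module.End.eigenspace (toLin' M) t := by
  rw [Module.End.eigenspace_def, map_sub, map_smul, toLin'_one, Module.End.one_eq_id]

/-- Pointwise linear algebra of Section 2.2: for `N = P·W` with `P`, `W` real
antisymmetric `2n×2n` matrices and `W` invertible, each real eigenspace of `N`
is even-dimensional, hence `N` has at most `n` distinct real eigenvalues. -/
theorem stmt_14 (n : ℕ) (P W : Matrix (Fin (2 * n)) (Fin (2 * n)) ℝ)
    (hP : Pᵀ = -P) (hW : Wᵀ = -W) (hWinv : IsUnit W) :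
    (∀ t : ℝ,
      Even (Module.finrank ℝ
        (LinearMap.ker (Matrix.toLin' (P * W - t • (1 : Matrix (Fin (2 * n)) (Fin (2 * n)) ℝ)))))) ∧
    (∀ s : Finset ℝ,
      (∀ t ∈ s,
        LinearMap.ker (Matrix.toLin' (P * W - t • (1 : Matrix (Fin (2 * n)) (Fin (2 * n)) ℝ))) ≠ ⊥) →
      s.card ≤ n) := by
  have heven := even_finrank_ker_mul_sub_smul_one (by simp [ringChar.eq_zero])
    (by simp) hP hW hWinv
  refine ⟨heven, fun s hs ↦ ?_⟩
  have htwo : ∀ t ∈ s, 2 ≤ finrank ℝ (Module.End.eigenspace (toLin' (P * W)) t) := fun t ht ↦ by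
    rw [← ker_toLin'_sub_smul_one]
    have hne : finrank ℝ (LinearMap.ker (toLin' (P * W - t • 1))) ≠ 0 :=
      mt Submodule.finrank_eq_zero.mp (hs t ht)
    obtain ⟨k, hk⟩ := heven t
    omega
  have := Module.End.card_mul_le_finrank_of_le_finrank_eigenspace (toLin' (P * W)) htwo
  rw [finrank_fin_fun] at this
  omega
end
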